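/- arXiv:1602.04036 — 4 statements merged into one kernel-verified Lean document; each statement's English description precedes it below -/
import Mathlib

section
/- Let X and Y be real normed vector spaces, A : X → Y a continuous linear operator, y ∈ Y, q > 1 a real number, u an element of the continuous dual X*, N a natural number, and v*₁, …, v*_N elements of the continuous dual Y*. Set g_k := v*_k ∘ A ∈ X* and β_k := ⟨v*_k, y⟩ for k = 1, …, N, and define h : ℝ^N → ℝ by h(t) = (1/q)‖u − Σ_{k=1}^N t_k g_k‖^q + Σ_{k=1}^N t_k β_k. Suppose t̂ ∈ ℝ^N is a global minimizer of h, and suppose x₊ ∈ X is such that the function w ↦ (1/q)‖w‖^q on X* is Fréchet differentiable at the point u − Σ_k t̂_k g_k with derivative equal to the canonical image of x₊ in the double dual X** (i.e., the functional w ↦ ⟨w, x₊⟩). Then ⟨v*_j, A x₊ − y⟩ = 0 for every j = 1, …, N; that is, all search-direction precursors are orthogonal in the dual pairing to the new residual A x₊ − y. -/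
/-!
The SESOP functional is `t ↦ φ (u - L t) + b t` with `φ w = (1/q)‖w‖^q`, `L t = Σ tₖ gₖ` and
`b t = Σ tₖ βₖ`. At its minimizer the derivative `-(φ' ∘ L) + b` vanishes; since `φ'` is evaluation
at `xp`, testing against the `j`-th unit vector gives `⟨vⱼ*, A xp⟩ = ⟨vⱼ*, y⟩`.
-/

theorem IsLocalMin.hasFDerivAt_comp_eq {F E : Type*}
    [NormedAddCommGroup F] [NormedSpace ℝ F] [NormedAddCommGroup E] [NormedSpace ℝ E]
    {φ : E → ℝ} {φ' : E →L[ℝ] ℝ} (u : E) (L : F →L[ℝ] E) (b : F →L[ℝ] ℝ) {t : F}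
    (hmin : IsLocalMin (fun s => φ (u - L s) + b s) t) (hφ : HasFDerivAt φ φ' (u - L t)) :
    φ'.comp L = b := by
  have hinner : HasFDerivAt (fun s => u - L s) (-L) t := by
    simpa using (L.hasFDerivAt (x := t)).const_sub u
  have hderiv := (hφ.comp t hinner).add b.hasFDerivAt
  have hzero := hmin.hasFDerivAt_eq_zero hderiv
  rw [ContinuousLinearMap.comp_neg, neg_add_eq_zero] at hzero
  exact hzero

theorem precursors_orthogonal_to_new_residual_general
    {X Y : Type*} [NormedAddCommGroup X] [NormedSpace ℝ X]
    [NormedAddCommGroup Y] [NormedSpace ℝ Y]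
    (A : X →L[ℝ] Y) (y : Y) (q : ℝ)
    (u : X →L[ℝ] ℝ) (N : ℕ) (v : Fin N → (Y →L[ℝ] ℝ))
    (that : Fin N → ℝ)
    (hmin : ∀ t : Fin N → ℝ,
      (1/q) * ‖u - ∑ k, that k • (v k).comp A‖ ^ q + ∑ k, that k * (v k) y ≤
      (1/q) * ‖u - ∑ k, t k • (v k).comp A‖ ^ q + ∑ k, t k * (v k) y)
    (xp : X)
    (hder : HasFDerivAt (fun w : X →L[ℝ] ℝ => (1/q) * ‖w‖ ^ q)
      (NormedSpace.inclusionInDoubleDual ℝ X xp) (u - ∑ k, that k • (v k).comp A)) :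
    ∀ j : Fin N, (v j) (A xp - y) = 0 := by
  intro j
  set L := (Fintype.linearCombination ℝ fun k => (v k).comp A).toContinuousLinearMap
  set b := (Fintype.linearCombination ℝ fun k => v k y).toContinuousLinearMap
  have hlocal : IsLocalMin (fun t => (1/q) * ‖u - L t‖ ^ q + b t) that :=
    (isMinOn_univ_iff.2 (by simpa [L, b, Fintype.linearCombination_apply] using hmin)).isLocalMin
      Filter.univ_mem
  have hcomp := hlocal.hasFDerivAt_comp_eq u L b (by simpa [L, Fintype.linearCombination_apply])
  have hj := congrArg (fun f => f (Pi.single j 1)) hcomp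
  simp only [ContinuousLinearMap.comp_apply, L, b, LinearMap.coe_toContinuousLinearMap',
    Fintype.linearCombination_apply_single, one_smul] at hj
  rw [map_sub, sub_eq_zero]
  exact hj

/-- if `that` globally minimizes the SESOP line-search functional
`h t = (1/q)‖u − Σ tₖ gₖ‖^q + Σ tₖ βₖ` with `gₖ = A* vₖ*` and `βₖ = ⟨vₖ*, y⟩`, and the
map `w ↦ (1/q)‖w‖^q` on `X*` is Fréchet differentiable at `u − Σ thatₖ gₖ` with derivative
the canonical image of `xp` in the double dual, then `⟨vⱼ*, A xp − y⟩ = 0` for all `j`. -/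
theorem precursors_orthogonal_to_new_residual
    {X Y : Type*} [NormedAddCommGroup X] [NormedSpace ℝ X]
    [NormedAddCommGroup Y] [NormedSpace ℝ Y]
    (A : X →L[ℝ] Y) (y : Y) (q : ℝ) (hq : 1 < q)
    (u : X →L[ℝ] ℝ) (N : ℕ) (v : Fin N → (Y →L[ℝ] ℝ))
    (that : Fin N → ℝ)
    (hmin : ∀ t : Fin N → ℝ,
      (1/q) * ‖u - ∑ k, that k • (v k).comp A‖ ^ q + ∑ k, that k * (v k) y ≤
      (1/q) * ‖u - ∑ k, t k • (v k).comp A‖ ^ q + ∑ k, t k * (v k) y)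
    (xp : X)
    (hder : HasFDerivAt (fun w : X →L[ℝ] ℝ => (1/q) * ‖w‖ ^ q)
      (NormedSpace.inclusionInDoubleDual ℝ X xp) (u - ∑ k, that k • (v k).comp A)) :
    ∀ j : Fin N, (v j) (A xp - y) = 0 :=
  precursors_orthogonal_to_new_residual_general A y q u N v that hmin xp hder
end

section
/- Let X and Y be real normed vector spaces, A : X → Y a continuous linear operator, y ∈ Y with A z = y for some z ∈ X, and r > 0. Let x₁, …, x_N ∈ X with A x_n ≠ y for every n, and let v*₁, …, v*_N ∈ Y* be such that ⟨v*_n, A x_n − y⟩ = ‖A x_n − y‖^r for every n, and ⟨v*_k, A x_n − y⟩ = 0 whenever k < n. Then the functionals A* v*₁, …, A* v*_N (where A* v* := v* ∘ A) are linearly independent in X*, and consequently v*₁, …, v*_N are linearly independent in Y*. -/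
/-! Pairing `A* vₖ*` with `xₙ − z` gives `⟨vₖ*, A xₙ − y⟩`, a lower-triangular matrix whose
diagonal `‖A xₙ − y‖ ^ r` does not vanish, so its determinant is nonzero. Independence of the
`vₙ*` follows because `A*` is linear. -/

theorem linearIndependent_of_lowerTriangular_pairing {ι R M : Type*} [Fintype ι] [LinearOrder ι]
    [CommRing R] [IsDomain R] [AddCommGroup M] [Module R M] {f : ι → M} (e : ι → M →ₗ[R] R)
    (hlower : ∀ k n, k < n → e n (f k) = 0) (hdiag : ∀ n, e n (f n) ≠ 0) :
    LinearIndependent R f := by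
  classical
  have htri : (Matrix.of fun k n => e n (f k)).IsLowerTriangular := fun k n hkn => hlower k n hkn
  have hdet : (Matrix.of fun k n => e n (f k)).det ≠ 0 := by
    rw [Matrix.det_of_isLowerTriangular _ htri]
    exact Finset.prod_ne_zero_iff.mpr fun n _ => hdiag n
  exact .of_comp (LinearMap.pi e) (Matrix.linearIndependent_rows_of_det_ne_zero hdet)

theorem orthogonalized_precursors_linearIndependent_general
    {X Y : Type*} [NormedAddCommGroup X] [NormedSpace ℝ X]
    [NormedAddCommGroup Y] [NormedSpace ℝ Y]
    (A : X →L[ℝ] Y) (y : Y) (hy : ∃ z : X, A z = y) (r : ℝ)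
    (N : ℕ) (x : Fin N → X) (v : Fin N → (Y →L[ℝ] ℝ))
    (hres : ∀ n : Fin N, A (x n) ≠ y)
    (hdual : ∀ n : Fin N, (v n) (A (x n) - y) = ‖A (x n) - y‖ ^ r)
    (horth : ∀ k n : Fin N, k < n → (v k) (A (x n) - y) = 0) :
    LinearIndependent ℝ (fun n : Fin N => (v n).comp A) ∧
      LinearIndependent ℝ v := by
  obtain ⟨z, rfl⟩ := hy
  have hadj : LinearIndependent ℝ (fun n : Fin N => (v n).comp A) := by
    refine linearIndependent_of_lowerTriangular_pairing
      (fun n => (ContinuousLinearMap.apply ℝ ℝ (x n - z)).toLinearMap)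
      (fun k n hkn => ?_) (fun n => ?_)
    · simpa using horth k n hkn
    · have hpos : 0 < ‖A (x n) - A z‖ ^ r :=
        Real.rpow_pos_of_pos (norm_pos_iff.mpr (sub_ne_zero.mpr (hres n))) r
      simpa using (hdual n).trans_ne hpos.ne'
  exact ⟨hadj, hadj.of_comp (ContinuousLinearMap.precomp ℝ A).toLinearMap⟩

/-- if `⟨vₙ*, A xₙ − y⟩ = ‖A xₙ − y‖^r` and `⟨vₖ*, A xₙ − y⟩ = 0` for `k < n`,
with all residuals nonzero, then the functionals `A* vₙ* = vₙ* ∘ A` are linearly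
independent in `X*`, and consequently the `vₙ*` are linearly independent in `Y*`. -/
theorem orthogonalized_precursors_linearIndependent
    {X Y : Type*} [NormedAddCommGroup X] [NormedSpace ℝ X]
    [NormedAddCommGroup Y] [NormedSpace ℝ Y]
    (A : X →L[ℝ] Y) (y : Y) (hy : ∃ z : X, A z = y) (r : ℝ) (hr : 0 < r)
    (N : ℕ) (x : Fin N → X) (v : Fin N → (Y →L[ℝ] ℝ))
    (hres : ∀ n : Fin N, A (x n) ≠ y)
    (hdual : ∀ n : Fin N, (v n) (A (x n) - y) = ‖A (x n) - y‖ ^ r)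
    (horth : ∀ k n : Fin N, k < n → (v k) (A (x n) - y) = 0) :
    LinearIndependent ℝ (fun n : Fin N => (v n).comp A) ∧
      LinearIndependent ℝ v :=
  orthogonalized_precursors_linearIndependent_general A y hy r N x v hres hdual horth
end

section
/- Let X and Y be real normed vector spaces, A : X → Y a nonzero continuous linear operator, 0 ≠ x ∈ X, 0 ≠ y* ∈ Y*, and let p, q > 1 be conjugate exponents (1/p + 1/q = 1). Let τ ∈ (0, 1] and set μ := τ ‖x‖^{p−1} / (‖A‖ ‖y*‖). Let j ∈ X* satisfy ‖j‖ = ‖x‖^{p−1} (a duality-mapping value J_p(x)), write w* := μ · (y* ∘ A) ∈ X*, and let G > 0. Let ρ : ℝ → ℝ be measurable, non-negative and non-decreasing on [0, ∞), with t ↦ ρ(t)/t non-decreasing on (0, ∞). Define σ̃ := q G ∫₀¹ (max(‖j − t w*‖, ‖j‖))^q / t · ρ( t ‖w*‖ / max(‖j − t w*‖, ‖j‖) ) dt. Then (1/q) σ̃ ≤ 2^q G ‖x‖^p ρ(τ). -/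
open Set Filter Topology

/-! The step width `μ` is chosen so that `‖w*‖ ≤ τ ‖j‖`; then `‖j − t w*‖ ≤ 2 ‖j‖` on `[0, 1]`, and
since `ρ(s)/s` is non-decreasing, `ρ(s) ≤ s ρ(τ)/τ` at the argument `s = t ‖w*‖ / max(…) ≤ τ`.
The factor `1/t` cancels against the `t` in `s`, so the integrand is bounded by
`(2‖j‖)^(q−1) · τ‖j‖ · ρ(τ)/τ = 2^(q−1) ‖x‖^p ρ(τ)`, using `(p − 1) q = p`. -/

lemma norm_div_opNorm_mul_smul_comp_le {E F H : Type*}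
    [SeminormedAddCommGroup E] [NormedSpace ℝ E] [SeminormedAddCommGroup F] [NormedSpace ℝ F]
    [SeminormedAddCommGroup H] [NormedSpace ℝ H]
    {c : ℝ} (hc : 0 ≤ c) (A : E →L[ℝ] F) (y : F →L[ℝ] H) :
    ‖(c / (‖A‖ * ‖y‖)) • y.comp A‖ ≤ c := by
  have hcoef : 0 ≤ c / (‖A‖ * ‖y‖) := by positivity
  calc ‖(c / (‖A‖ * ‖y‖)) • y.comp A‖ = c / (‖A‖ * ‖y‖) * ‖y.comp A‖ := by
        rw [norm_smul, Real.norm_of_nonneg hcoef]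
    _ ≤ c / (‖A‖ * ‖y‖) * (‖y‖ * ‖A‖) := mul_le_mul_of_nonneg_left (y.opNorm_comp_le A) hcoef
    _ ≤ c := by
        rw [mul_comm ‖y‖]
        rcases eq_or_ne (‖A‖ * ‖y‖) 0 with h | h
        · simp [h, hc]
        · rw [div_mul_cancel₀ c h]

lemma max_norm_sub_le_two_mul {E : Type*} [SeminormedAddGroup E] {j v : E} (h : ‖v‖ ≤ ‖j‖) :
    max ‖j - v‖ ‖j‖ ≤ 2 * ‖j‖ :=
  max_le ((norm_sub_le j v).trans (by linarith)) (by linarith [norm_nonneg j])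

section RatioMonotone

variable {ρ : ℝ → ℝ} (hmono : MonotoneOn ρ (Ici 0))
  (hratio : MonotoneOn (fun t => ρ t / t) (Ioi 0))
include hmono hratio

lemma apply_zero_nonpos_of_monotoneOn_div : ρ 0 ≤ 0 := by
  have hle : ∀ t ∈ Ioc (0 : ℝ) 1, ρ 0 ≤ t * ρ 1 := by
    rintro t ⟨ht0, ht1⟩
    have hratio_le : ρ t / t ≤ ρ 1 / 1 := hratio ht0 (mem_Ioi.2 one_pos) ht1
    rw [div_one, div_le_iff₀' ht0] at hratio_le
    exact (hmono self_mem_Ici ht0.le ht0.le).trans hratio_le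
  have hlim : Tendsto (fun t => t * ρ 1) (𝓝[>] 0) (𝓝 0) := by
    simpa using ((continuous_mul_const (ρ 1)).tendsto 0).mono_left nhdsWithin_le_nhds
  exact ge_of_tendsto hlim (eventually_of_mem (Ioc_mem_nhdsGT one_pos) hle)

lemma le_mul_div_of_monotoneOn_div {s τ : ℝ} (hs : 0 ≤ s) (hsτ : s ≤ τ) (hτ : 0 < τ) :
    ρ s ≤ s * (ρ τ / τ) := by
  rcases hs.eq_or_lt with rfl | hs
  · simpa using apply_zero_nonpos_of_monotoneOn_div hmono hratio
  · exact (div_le_iff₀' hs).1 (hratio hs hτ hsτ)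

lemma rpow_div_mul_apply_mul_div_le {q a b M t τ : ℝ} (hq : 1 ≤ q) (hb : 0 ≤ b) (hba : b ≤ τ * a)
    (ht0 : 0 ≤ t) (ht1 : t ≤ 1) (haM : a ≤ M) (hMa : M ≤ 2 * a) (hτ : 0 < τ) (hρτ : 0 ≤ ρ τ) :
    M ^ q / t * ρ (t * b / M) ≤ 2 ^ (q - 1) * a ^ q * ρ τ := by
  have ha : 0 ≤ a := by linarith
  have hM : 0 ≤ M := ha.trans haM
  have hs_le : t * b / M ≤ τ := by
    refine div_le_of_le_mul₀ hM hτ.le ?_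
    calc t * b ≤ 1 * (τ * a) := mul_le_mul ht1 hba hb zero_le_one
      _ ≤ τ * M := by rw [one_mul]; exact mul_le_mul_of_nonneg_left haM hτ.le
  -- the `t` in the argument of `ρ` cancels the singular factor `1 / t`
  have hcancel : M ^ q / t * (t * b / M) ≤ M ^ (q - 1) * b := by
    rcases ht0.eq_or_lt with rfl | ht
    · simp only [div_zero, zero_mul]; positivity
    rcases hM.eq_or_lt with rfl | hM
    · simp only [div_zero, mul_zero]; positivity
    rw [Real.rpow_sub_one hM.ne']
    exact le_of_eq (by field_simp)
  calc M ^ q / t * ρ (t * b / M) ≤ M ^ q / t * (t * b / M * (ρ τ / τ)) :=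
        mul_le_mul_of_nonneg_left
          (le_mul_div_of_monotoneOn_div hmono hratio (by positivity) hs_le hτ) (by positivity)
    _ = M ^ q / t * (t * b / M) * (ρ τ / τ) := by ring
    _ ≤ M ^ (q - 1) * b * (ρ τ / τ) := mul_le_mul_of_nonneg_right hcancel (by positivity)
    _ ≤ (2 * a) ^ (q - 1) * (τ * a) * (ρ τ / τ) := by gcongr
    _ = 2 ^ (q - 1) * a ^ q * ρ τ := by
        have ha_rpow : a ^ q = a ^ (q - 1) * a := by
          rw [← Real.rpow_add_one' ha (by linarith), sub_add_cancel]
        rw [Real.mul_rpow zero_le_two ha, ha_rpow]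
        field_simp

end RatioMonotone

lemma intervalIntegral_le_of_forall_le {f : ℝ → ℝ} {a b C : ℝ} (hab : a ≤ b) (hC : 0 ≤ C)
    (hf : ∀ t ∈ Icc a b, f t ≤ C) : ∫ t in a..b, f t ≤ (b - a) * C := by
  by_cases hint : IntervalIntegrable f MeasureTheory.volume a b
  · simpa using intervalIntegral.integral_mono_on hab hint intervalIntegrable_const hf
  · -- a non-integrable integrand has integral `0`
    rw [intervalIntegral.integral_undef hint]
    exact mul_nonneg (sub_nonneg.2 hab) hC

theorem sigma_tilde_upper_bound_general
    {X Y : Type*} [NormedAddCommGroup X] [NormedSpace ℝ X]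
    [NormedAddCommGroup Y] [NormedSpace ℝ Y]
    (A : X →L[ℝ] Y) (x : X)
    (y' : Y →L[ℝ] ℝ)
    (p q : ℝ) (hp : 1 < p) (hpq : 1/p + 1/q = 1)
    (τ : ℝ) (hτ : τ ∈ Set.Ioc (0:ℝ) 1)
    (μ : ℝ) (hμ : μ = τ * ‖x‖ ^ (p - 1) / (‖A‖ * ‖y'‖))
    (j : X →L[ℝ] ℝ) (hj : ‖j‖ = ‖x‖ ^ (p - 1))
    (w : X →L[ℝ] ℝ) (hw : w = μ • y'.comp A)
    (G : ℝ) (hG : 0 < G)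
    (ρ : ℝ → ℝ)
    (hnonneg : ∀ t ∈ Set.Ici (0:ℝ), 0 ≤ ρ t)
    (hmono : MonotoneOn ρ (Set.Ici (0:ℝ)))
    (hratio : MonotoneOn (fun t => ρ t / t) (Set.Ioi (0:ℝ)))
    (σ' : ℝ)
    (hσ : σ' = q * G * ∫ t in (0:ℝ)..1,
      (max ‖j - t • w‖ ‖j‖) ^ q / t * ρ (t * ‖w‖ / max ‖j - t • w‖ ‖j‖)) :
    (1/q) * σ' ≤ 2 ^ q * G * ‖x‖ ^ p * ρ τ := by
  obtain ⟨hτ0, hτ1⟩ := hτ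
  have hρτ : 0 ≤ ρ τ := hnonneg τ hτ0.le
  have hconj : p.HolderConjugate q :=
    Real.holderConjugate_iff.2 ⟨hp, by simpa only [one_div] using hpq⟩
  have hw_le : ‖w‖ ≤ τ * ‖j‖ := by
    rw [hw, hμ, hj]
    exact norm_div_opNorm_mul_smul_comp_le (by positivity) A y'
  have hjq : ‖j‖ ^ q = ‖x‖ ^ p := by
    rw [hj, ← Real.rpow_mul (norm_nonneg x), hconj.sub_one_mul_conj]
  have hbound : ∀ t ∈ Icc (0 : ℝ) 1, (max ‖j - t • w‖ ‖j‖) ^ q / t *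
      ρ (t * ‖w‖ / max ‖j - t • w‖ ‖j‖) ≤ 2 ^ (q - 1) * ‖x‖ ^ p * ρ τ := by
    rintro t ⟨ht0, ht1⟩
    have htw : ‖t • w‖ ≤ ‖j‖ := by
      rw [norm_smul, Real.norm_of_nonneg ht0]
      nlinarith [norm_nonneg w, norm_nonneg j]
    rw [← hjq]
    exact rpow_div_mul_apply_mul_div_le hmono hratio hconj.symm.lt.le (norm_nonneg w) hw_le ht0 ht1
      (le_max_right _ _) (max_norm_sub_le_two_mul htw) hτ0 hρτ
  calc (1/q) * σ' = G * ∫ t in (0:ℝ)..1,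
        (max ‖j - t • w‖ ‖j‖) ^ q / t * ρ (t * ‖w‖ / max ‖j - t • w‖ ‖j‖) := by
        rw [hσ, mul_assoc, ← mul_assoc, one_div_mul_cancel hconj.symm.ne_zero, one_mul]
    _ ≤ G * ((1 - 0) * (2 ^ (q - 1) * ‖x‖ ^ p * ρ τ)) := by
        gcongr
        exact intervalIntegral_le_of_forall_le zero_le_one (by positivity) hbound
    _ = 2 ^ (q - 1) * (G * ‖x‖ ^ p * ρ τ) := by ring
    _ ≤ 2 ^ q * (G * ‖x‖ ^ p * ρ τ) := by gcongr <;> linarith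
    _ = 2 ^ q * G * ‖x‖ ^ p * ρ τ := by ring

/-- the upper bound on the Xu–Roach remainder term
`σ̃ = q G ∫₀¹ (max(‖j − t w*‖, ‖j‖))^q / t · ρ(t‖w*‖ / max(‖j − t w*‖, ‖j‖)) dt`
for the step width `μ = τ ‖x‖^{p−1} / (‖A‖ ‖y*‖)`:  `(1/q) σ̃ ≤ 2^q G ‖x‖^p ρ(τ)`. -/
theorem sigma_tilde_upper_bound
    {X Y : Type*} [NormedAddCommGroup X] [NormedSpace ℝ X]
    [NormedAddCommGroup Y] [NormedSpace ℝ Y]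
    (A : X →L[ℝ] Y) (hA : A ≠ 0) (x : X) (hx : x ≠ 0)
    (y' : Y →L[ℝ] ℝ) (hy' : y' ≠ 0)
    (p q : ℝ) (hp : 1 < p) (hq : 1 < q) (hpq : 1/p + 1/q = 1)
    (τ : ℝ) (hτ : τ ∈ Set.Ioc (0:ℝ) 1)
    (μ : ℝ) (hμ : μ = τ * ‖x‖ ^ (p - 1) / (‖A‖ * ‖y'‖))
    (j : X →L[ℝ] ℝ) (hj : ‖j‖ = ‖x‖ ^ (p - 1))
    (w : X →L[ℝ] ℝ) (hw : w = μ • y'.comp A)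
    (G : ℝ) (hG : 0 < G)
    (ρ : ℝ → ℝ) (hmeas : Measurable ρ)
    (hnonneg : ∀ t ∈ Set.Ici (0:ℝ), 0 ≤ ρ t)
    (hmono : MonotoneOn ρ (Set.Ici (0:ℝ)))
    (hratio : MonotoneOn (fun t => ρ t / t) (Set.Ioi (0:ℝ)))
    (σ' : ℝ)
    (hσ : σ' = q * G * ∫ t in (0:ℝ)..1,
      (max ‖j - t • w‖ ‖j‖) ^ q / t * ρ (t * ‖w‖ / max ‖j - t • w‖ ‖j‖)) :
    (1/q) * σ' ≤ 2 ^ q * G * ‖x‖ ^ p * ρ τ :=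
  sigma_tilde_upper_bound_general A x y' p q hp hpq τ hτ μ hμ j hj w hw G hG ρ hnonneg hmono hratio
    σ' hσ
end

section
/- Let X be a real normed vector space and let p, q > 1 be conjugate exponents (1/p + 1/q = 1). Let x, x₊, z ∈ X and let j, j₊ ∈ X* satisfy ⟨j, x⟩ = ‖x‖^p, ‖j‖ = ‖x‖^{p−1}, ⟨j₊, x₊⟩ = ‖x₊‖^p, and ‖j₊‖ = ‖x₊‖^{p−1}. Define the Bregman distances D(x, w) := (1/q)‖x‖^p − ⟨j, w⟩ + (1/p)‖w‖^p and D(x₊, w) := (1/q)‖x₊‖^p − ⟨j₊, w⟩ + (1/p)‖w‖^p. Suppose there are g₁, …, g_N ∈ X*, β₁, …, β_N ∈ ℝ and t ∈ ℝ^N such that j − j₊ = Σ_{k=1}^N t_k g_k, and such that both x₊ and z lie on every hyperplane: ⟨g_k, x₊⟩ = β_k and ⟨g_k, z⟩ = β_k for all k. Then the Pythagoras-type identity D(x, z) = D(x, x₊) + D(x₊, z) holds, and in particular D(x₊, z) ≤ D(x, z); i.e., the SESOP update x₊ is the Bregman projection of x onto the intersection of the hyperplanes H(g_k, β_k). -/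
/-!
Expanding the three Bregman distances, `D(x, z) - D(x, xp) - D(xp, z)` collapses to
`(j - jp) (xp - z)` once `jp xp = ‖xp‖ ^ p` and `1/p + 1/q = 1` are used. Since
`j - jp = ∑ tₖ gₖ` and `xp`, `z` lie on the same hyperplanes, this pairing vanishes. The
inequality then follows from `D(x, xp) ≥ 0`, which is Young's inequality applied to
`j xp ≤ ‖x‖ ^ (p - 1) * ‖xp‖`.
-/

section

variable {X : Type*} [NormedAddCommGroup X] [NormedSpace ℝ X]

/-- The Bregman distance `D_p(x, w)` of `w ↦ ‖w‖ ^ p / p`, where `j` plays the role of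
`J_p(x)`. -/
noncomputable def bregmanDist (p q : ℝ) (x : X) (j : X →L[ℝ] ℝ) (w : X) : ℝ :=
  (1 / q) * ‖x‖ ^ p - j w + (1 / p) * ‖w‖ ^ p

theorem bregmanDist_nonneg {p q : ℝ} (hpq : p.HolderConjugate q) {x : X} {j : X →L[ℝ] ℝ}
    (hj : ‖j‖ ≤ ‖x‖ ^ (p - 1)) (w : X) : 0 ≤ bregmanDist p q x j w := by
  have hyoung := Real.young_inequality_of_nonneg
    (Real.rpow_nonneg (norm_nonneg x) (p - 1)) (norm_nonneg w) hpq.symm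
  rw [← Real.rpow_mul (norm_nonneg x), hpq.sub_one_mul_conj] at hyoung
  have hjw : j w ≤ ‖x‖ ^ (p - 1) * ‖w‖ :=
    calc j w ≤ ‖j w‖ := le_abs_self _
      _ ≤ ‖j‖ * ‖w‖ := j.le_opNorm w
      _ ≤ ‖x‖ ^ (p - 1) * ‖w‖ := by gcongr
  rw [bregmanDist, one_div_mul_eq_div, one_div_mul_eq_div]
  linarith

theorem bregmanDist_three_point {p q : ℝ} (hpq : 1 / p + 1 / q = 1) (x y z : X)
    (j jy : X →L[ℝ] ℝ) (hjy : jy y = ‖y‖ ^ p) :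
    bregmanDist p q x j z =
      bregmanDist p q x j y + bregmanDist p q y jy z + (j - jy) (y - z) := by
  have hsplit : ‖y‖ ^ p = (1 / p) * ‖y‖ ^ p + (1 / q) * ‖y‖ ^ p := by
    rw [← add_mul, hpq, one_mul]
  simp only [bregmanDist, sub_apply, map_sub]
  linarith

theorem ContinuousLinearMap.sum_smul_apply_sub_eq_zero {ι : Type*} (s : Finset ι)
    (t : ι → ℝ) (g : ι → X →L[ℝ] ℝ) {y z : X} (hyz : ∀ k ∈ s, g k y = g k z) :
    (∑ k ∈ s, t k • g k) (y - z) = 0 := by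
  simp only [sum_apply, smul_apply, map_sub, sub_eq_zero]
  exact Finset.sum_congr rfl fun k hk => by rw [hyz k hk]

end

theorem sesop_update_bregman_pythagoras_general
    {X : Type*} [NormedAddCommGroup X] [NormedSpace ℝ X]
    (p q : ℝ) (hp : 1 < p) (hpq : 1/p + 1/q = 1)
    (x xp z : X) (j jp : X →L[ℝ] ℝ)
    (hjnorm : ‖j‖ = ‖x‖ ^ (p - 1))
    (hjpx : jp xp = ‖xp‖ ^ p)
    (N : ℕ) (g : Fin N → (X →L[ℝ] ℝ)) (β : Fin N → ℝ) (t : Fin N → ℝ)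
    (hupdate : j - jp = ∑ k, t k • g k)
    (hxpmem : ∀ k, (g k) xp = β k) (hzmem : ∀ k, (g k) z = β k) :
    ((1/q) * ‖x‖ ^ p - j z + (1/p) * ‖z‖ ^ p =
        ((1/q) * ‖x‖ ^ p - j xp + (1/p) * ‖xp‖ ^ p) +
        ((1/q) * ‖xp‖ ^ p - jp z + (1/p) * ‖z‖ ^ p)) ∧
      (1/q) * ‖xp‖ ^ p - jp z + (1/p) * ‖z‖ ^ p ≤
        (1/q) * ‖x‖ ^ p - j z + (1/p) * ‖z‖ ^ p := by
  change bregmanDist p q x j z = bregmanDist p q x j xp + bregmanDist p q xp jp z ∧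
    bregmanDist p q xp jp z ≤ bregmanDist p q x j z
  have hconj : p.HolderConjugate q := Real.holderConjugate_iff.mpr ⟨hp, by simpa using hpq⟩
  have horth : (j - jp) (xp - z) = 0 := by
    rw [hupdate]
    exact ContinuousLinearMap.sum_smul_apply_sub_eq_zero _ t g fun k _ =>
      (hxpmem k).trans (hzmem k).symm
  have hpyth := bregmanDist_three_point hpq x xp z j jp hjpx
  rw [horth, add_zero] at hpyth
  refine ⟨hpyth, ?_⟩
  linarith [bregmanDist_nonneg hconj hjnorm.le xp]

/-- Pythagoras-type identity for the SESOP update: if `j − jp = Σ tₖ gₖ`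
and both `xp` and `z` lie on every hyperplane `H(gₖ, βₖ)`, then
`D(x, z) = D(x, xp) + D(xp, z)`, and in particular `D(xp, z) ≤ D(x, z)`. -/
theorem sesop_update_bregman_pythagoras
    {X : Type*} [NormedAddCommGroup X] [NormedSpace ℝ X]
    (p q : ℝ) (hp : 1 < p) (hq : 1 < q) (hpq : 1/p + 1/q = 1)
    (x xp z : X) (j jp : X →L[ℝ] ℝ)
    (hjx : j x = ‖x‖ ^ p) (hjnorm : ‖j‖ = ‖x‖ ^ (p - 1))
    (hjpx : jp xp = ‖xp‖ ^ p) (hjpnorm : ‖jp‖ = ‖xp‖ ^ (p - 1))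
    (N : ℕ) (g : Fin N → (X →L[ℝ] ℝ)) (β : Fin N → ℝ) (t : Fin N → ℝ)
    (hupdate : j - jp = ∑ k, t k • g k)
    (hxpmem : ∀ k, (g k) xp = β k) (hzmem : ∀ k, (g k) z = β k) :
    ((1/q) * ‖x‖ ^ p - j z + (1/p) * ‖z‖ ^ p =
        ((1/q) * ‖x‖ ^ p - j xp + (1/p) * ‖xp‖ ^ p) +
        ((1/q) * ‖xp‖ ^ p - jp z + (1/p) * ‖z‖ ^ p)) ∧
      (1/q) * ‖xp‖ ^ p - jp z + (1/p) * ‖z‖ ^ p ≤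
        (1/q) * ‖x‖ ^ p - j z + (1/p) * ‖z‖ ^ p :=
  sesop_update_bregman_pythagoras_general p q hp hpq x xp z j jp hjnorm hjpx N g β t hupdate hxpmem
    hzmem
end
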